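/- Let S be a decomposable and selective sum-product expression over the semiring ℝ≥0 with finite nonempty domains X i. Define M(S) ∈ ℝ≥0 recursively: M of a constant leaf c is c; M of a leaf (i, φ) is max_{t ∈ X i} φ t; M of a Product node is the product of the M-values of its children; M of a Sum node is the maximum of the M-values of its children. Then max_{x : ∀ i, X i} eval S x = M(S); that is, eval S x ≤ M(S) for all full assignments x, and there exists x with eval S x = M(S). -/

import Mathlib

open Finset

/-- A sum-product expression (SPF) over a commutative semiring `R` in variables
indexed by `ι` with domains `X i`. -/
inductive SPF (R : Type) (ι : Type) (X : ι → Type) where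
  | const : R → SPF R ι X
  | leaf : (i : ι) → (X i → R) → SPF R ι X
  | sum : List (SPF R ι X) → SPF R ι X
  | prod : List (SPF R ι X) → SPF R ι X

namespace SPF

variable {R : Type} [CommSemiring R] {ι : Type} [DecidableEq ι] {X : ι → Type}

/-- Evaluation of an SPF at a full assignment. -/
def eval : SPF R ι X → ((i : ι) → X i) → R
  | .const c, _ => c
  | .leaf i φ, x => φ (x i)
  | .sum l, x => (l.attach.map fun c => c.1.eval x).sum
  | .prod l, x => (l.attach.map fun c => c.1.eval x).prod
decreasing_by all_goals (simp_wf; have := List.sizeOf_lt_of_mem c.2; omega)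

/-- The scope of an SPF: the set of variable indices appearing in its leaves. -/
def scope : SPF R ι X → Finset ι
  | .const _ => ∅
  | .leaf i _ => {i}
  | .sum l => (l.attach.map fun c => c.1.scope).foldr (· ∪ ·) ∅
  | .prod l => (l.attach.map fun c => c.1.scope).foldr (· ∪ ·) ∅
decreasing_by all_goals (simp_wf; have := List.sizeOf_lt_of_mem c.2; omega)

/-- An SPF is decomposable iff the children of every Product node have
pairwise disjoint scopes. -/
inductive Decomposable : SPF R ι X → Prop
  | const (c : R) : Decomposable (.const c)
  | leaf (i : ι) (φ : X i → R) : Decomposable (.leaf i φ)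
  | sum {l : List (SPF R ι X)} :
      (∀ G ∈ l, Decomposable G) → Decomposable (.sum l)
  | prod {l : List (SPF R ι X)} :
      (∀ G ∈ l, Decomposable G) →
      l.Pairwise (fun G H => Disjoint G.scope H.scope) →
      Decomposable (.prod l)

/-- An SPN (an SPF over `ℝ≥0`) is selective iff for every Sum node and every
full assignment, at most one child of the node evaluates to a nonzero value. -/
inductive Selective : SPF NNReal ι X → Prop
  | const (c : NNReal) : Selective (.const c)
  | leaf (i : ι) (φ : X i → NNReal) : Selective (.leaf i φ)
  | prod {l : List (SPF NNReal ι X)} :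
      (∀ G ∈ l, Selective G) → Selective (.prod l)
  | sum {l : List (SPF NNReal ι X)} :
      (∀ G ∈ l, Selective G) →
      (∀ x : (i : ι) → X i,
        l.Pairwise (fun G H => G.eval x = 0 ∨ H.eval x = 0)) →
      Selective (.sum l)

/-- The bottom-up MPE pass `M` (summation in the max-product semiring
`(ℝ≥0, max, ×, 0, 1)`): `M` of a constant leaf `c` is `c`, of a leaf `(i, φ)`
the maximum of `φ` over `X i`, of a Product node the product of its children's
values, of a Sum node the maximum of its children's values. -/
noncomputable def M [∀ i, Fintype (X i)] : SPF NNReal ι X → NNReal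
  | .const c => c
  | .leaf _ φ => Finset.univ.sup φ
  | .prod l => (l.attach.map fun c => c.1.M).prod
  | .sum l => (l.attach.map fun c => c.1.M).foldr max 0
decreasing_by all_goals (simp_wf; have := List.sizeOf_lt_of_mem c.2; omega)

end SPF

/-! Selectivity makes the value of a Sum node at `x` the value of at most one child, so
`eval S x ≤ M S` by induction. Conversely, `M` is attained: at a Sum node take a maximizing
assignment of the child with the largest `M`; at a Product node, decomposability lets the
maximizing assignments of the children, which live on disjoint scopes, be glued into one. -/

theorem List.sum_le_of_pairwise_eq_zero_or_eq_zero {M : Type*} [AddCommMonoid M] [PartialOrder M]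
    [CanonicallyOrderedAdd M] {l : List M} (hl : l.Pairwise fun a b => a = 0 ∨ b = 0) {c : M}
    (hc : ∀ a ∈ l, a ≤ c) : l.sum ≤ c := by
  induction l with
  | nil => exact zero_le
  | cons a t ih =>
    obtain ⟨ha, ht⟩ := List.pairwise_cons.mp hl
    rw [List.sum_cons]
    by_cases a0 : a = 0
    · rw [a0, zero_add]
      exact ih ht fun b hb => hc b (List.mem_cons_of_mem a hb)
    · rw [List.sum_eq_zero fun b hb => (ha b hb).resolve_left a0, add_zero]
      exact hc a List.mem_cons_self

theorem List.subset_foldr_union {α : Type*} [DecidableEq α] {L : List (Finset α)} {s : Finset α}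
    (h : s ∈ L) : s ⊆ L.foldr (· ∪ ·) ∅ :=
  Multiset.sup_coe L ▸ Multiset.le_sup (Multiset.mem_coe.mpr h)

namespace SPF

variable {R ι : Type} {X : ι → Type}

section Eval

variable [CommSemiring R]

@[simp] theorem eval_const (c : R) (x : (i : ι) → X i) : (const c : SPF R ι X).eval x = c := by
  rw [eval]

@[simp] theorem eval_leaf (i : ι) (φ : X i → R) (x : (i : ι) → X i) :
    (leaf i φ).eval x = φ (x i) := by
  rw [eval]

@[simp] theorem eval_sum (l : List (SPF R ι X)) (x : (i : ι) → X i) :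
    (sum l).eval x = (l.map (eval · x)).sum := by
  rw [eval]; simp

@[simp] theorem eval_prod (l : List (SPF R ι X)) (x : (i : ι) → X i) :
    (prod l).eval x = (l.map (eval · x)).prod := by
  rw [eval]; simp

end Eval

section Scope

variable [DecidableEq ι]

theorem scope_subset_scope_sum {l : List (SPF R ι X)} {G : SPF R ι X} (hG : G ∈ l) :
    G.scope ⊆ (sum l).scope := by
  rw [scope, List.map_attach_eq_pmap, List.pmap_eq_map]
  exact List.subset_foldr_union (List.mem_map_of_mem hG)

theorem scope_subset_scope_prod {l : List (SPF R ι X)} {G : SPF R ι X} (hG : G ∈ l) :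
    G.scope ⊆ (prod l).scope := by
  rw [scope, List.map_attach_eq_pmap, List.pmap_eq_map]
  exact List.subset_foldr_union (List.mem_map_of_mem hG)

variable [CommSemiring R]

theorem eval_congr {S : SPF R ι X} {x y : (i : ι) → X i} (h : ∀ i ∈ S.scope, x i = y i) :
    S.eval x = S.eval y := by
  induction S using scope.induct with
  | case1 c => simp
  | case2 i φ => simp [h i (by simp [scope])]
  | case3 l ih =>
    simp only [eval_sum]
    congr 1
    exact List.map_congr_left fun G hG =>
      ih ⟨G, hG⟩ fun i hi => h i (scope_subset_scope_sum hG hi)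
  | case4 l ih =>
    simp only [eval_prod]
    congr 1
    exact List.map_congr_left fun G hG =>
      ih ⟨G, hG⟩ fun i hi => h i (scope_subset_scope_prod hG hi)

theorem exists_eval_eq_of_pairwise_disjoint (x₀ : (i : ι) → X i) {l : List (SPF R ι X)}
    (hl : l.Pairwise fun G H => Disjoint G.scope H.scope) (y : SPF R ι X → (i : ι) → X i) :
    ∃ x : (i : ι) → X i, ∀ G ∈ l, G.eval x = G.eval (y G) := by
  induction l with
  | nil => exact ⟨x₀, by simp⟩
  | cons G t ih =>
    obtain ⟨hG, ht⟩ := List.pairwise_cons.mp hl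
    obtain ⟨x, hx⟩ := ih ht
    refine ⟨fun i => if i ∈ G.scope then y G i else x i, fun H hH => ?_⟩
    rcases List.mem_cons.mp hH with rfl | hH
    · exact eval_congr fun i hi => if_pos hi
    · rw [← hx H hH]
      exact eval_congr fun i hi => if_neg (Finset.disjoint_right.mp (hG H hH) hi)

end Scope

section MPE

variable [∀ i, Fintype (X i)]

@[simp] theorem M_const (c : NNReal) : (const c : SPF NNReal ι X).M = c := by
  rw [M]

@[simp] theorem M_leaf (i : ι) (φ : X i → NNReal) : (leaf i φ).M = Finset.univ.sup φ := by
  rw [M]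

@[simp] theorem M_sum (l : List (SPF NNReal ι X)) : (sum l).M = (l.map M).foldr max 0 := by
  rw [M]; simp

@[simp] theorem M_prod (l : List (SPF NNReal ι X)) : (prod l).M = (l.map M).prod := by
  rw [M]; simp

theorem Selective.eval_le_M {S : SPF NNReal ι X} (hS : S.Selective) (x : (i : ι) → X i) :
    S.eval x ≤ S.M := by
  induction hS with
  | const c => simp
  | leaf i φ => simpa using Finset.le_sup (f := φ) (Finset.mem_univ (x i))
  | prod _ ih =>
    rw [eval_prod, M_prod]
    exact List.prod_le_prod' ih
  | @sum l _ hsel ih =>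
    rw [eval_sum, M_sum]
    refine List.sum_le_of_pairwise_eq_zero_or_eq_zero ((hsel x).map _ fun _ _ h => h) ?_
    simp only [List.mem_map]
    rintro _ ⟨G, hG, rfl⟩
    exact List.le_max_of_le (List.mem_map_of_mem hG) (ih G hG)

theorem Decomposable.exists_M_le_eval [DecidableEq ι] [∀ i, Nonempty (X i)]
    {S : SPF NNReal ι X} (hS : S.Decomposable) : ∃ x : (i : ι) → X i, S.M ≤ S.eval x := by
  let x₀ : (i : ι) → X i := fun _ => Classical.arbitrary _
  induction hS with
  | const c => exact ⟨x₀, by simp⟩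
  | leaf i φ =>
    obtain ⟨t, -, ht⟩ := Finset.exists_mem_eq_sup Finset.univ Finset.univ_nonempty φ
    exact ⟨Function.update x₀ i t, by simp [ht]⟩
  | @sum l _ ih =>
    rcases eq_or_ne l [] with rfl | hl
    · exact ⟨x₀, by simp⟩
    have hmax : (l.map M).foldr max 0 ∈ l.map M :=
      List.maximum_mem (List.foldr_max_of_ne_nil (by simpa using hl)).symm
    obtain ⟨G, hG, hGM⟩ := List.mem_map.mp hmax
    obtain ⟨x, hx⟩ := ih G hG
    refine ⟨x, ?_⟩
    rw [M_sum, ← hGM, eval_sum]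
    exact hx.trans (List.single_le_sum (fun _ _ => zero_le) _ (List.mem_map_of_mem hG))
  | @prod l _ hdisj ih =>
    choose! y hy using ih
    obtain ⟨x, hx⟩ := exists_eval_eq_of_pairwise_disjoint x₀ hdisj y
    refine ⟨x, ?_⟩
    rw [M_prod, eval_prod]
    exact List.prod_le_prod' fun G hG => (hy G hG).trans (hx G hG).ge

end MPE

end SPF

theorem mpe_selective_decomposable_spn_general
    {ι : Type} [DecidableEq ι] {X : ι → Type}
    [∀ i, Fintype (X i)] [∀ i, Nonempty (X i)]
    (S : SPF NNReal ι X) (hdec : S.Decomposable) (hsel : S.Selective) :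
    (∀ x : (i : ι) → X i, S.eval x ≤ S.M) ∧
      ∃ x : (i : ι) → X i, S.eval x = S.M := by
  obtain ⟨x, hx⟩ := hdec.exists_M_le_eval
  exact ⟨hsel.eval_le_M, x, (hsel.eval_le_M x).antisymm hx⟩

/-- Corollary 10: the MPE value of a selective, decomposable SPN, i.e. the
maximum of its evaluation over all full assignments, equals the linear-time
bottom-up value `M(S)`: `eval S x ≤ M S` for all `x` and `eval S x = M S` for
some `x`. -/
theorem mpe_selective_decomposable_spn
    {ι : Type} [Fintype ι] [DecidableEq ι] {X : ι → Type}
    [∀ i, Fintype (X i)] [∀ i, Nonempty (X i)]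
    (S : SPF NNReal ι X) (hdec : S.Decomposable) (hsel : S.Selective) :
    (∀ x : (i : ι) → X i, S.eval x ≤ S.M) ∧
      ∃ x : (i : ι) → X i, S.eval x = S.M :=
  mpe_selective_decomposable_spn_general S hdec hsel
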